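/- Let D be a bipartite tournament which contains a directed cycle and has sink elimination index \zeta(D) >= 2. Then cindex(D) = \zeta(D) and cperiod(D) = 1. -/

import Mathlib

/-- `walkN D n u v` : there is a directed walk of length `n` from `u` to `v` in the digraph `D`. -/
def walkN {V : Type*} (D : V → V → Prop) : ℕ → V → V → Prop
  | 0 => fun u v => u = v
  | n+1 => fun u v => ∃ w, D u w ∧ walkN D n w v

/-- The `m`-step competition graph of the digraph `D`. -/
def cmGraph {V : Type*} (D : V → V → Prop) (m : ℕ) : SimpleGraph V where
  Adj u v := u ≠ v ∧ ∃ z, walkN D m u z ∧ walkN D m v z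
  symm := by
    refine ⟨?_⟩
    intro u v h
    exact ⟨Ne.symm h.1, h.2.imp fun z hz => ⟨hz.2, hz.1⟩⟩
  loopless := by refine ⟨?_⟩; intro v h; exact h.1 rfl

/-- Sinks of the subdigraph of `D` induced by `S`. -/
def sinks {V : Type*} (D : V → V → Prop) (S : Set V) : Set V :=
  {v ∈ S | ∀ w ∈ S, ¬ D v w}

/-- The digraph sequence `D_0, D_1, …` (as vertex sets) associated with the sink sequence. -/
def Dseq {V : Type*} (D : V → V → Prop) : ℕ → Set V
  | 0 => Set.univ
  | n+1 => Dseq D n \ sinks D (Dseq D n)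

/-- The sink sequence `W_0, W_1, …` of `D`. -/
def Wseq {V : Type*} (D : V → V → Prop) (n : ℕ) : Set V := sinks D (Dseq D n)

/-- `k` is the sink elimination index `ζ(D)`. -/
def IsSinkElimIndex {V : Type*} (D : V → V → Prop) (k : ℕ) : Prop :=
  (Wseq D k = Dseq D k ∨ Wseq D k = ∅) ∧
  ∀ j < k, Wseq D j ≠ Dseq D j ∧ Wseq D j ≠ ∅

/-- A digraph is acyclic iff it has no directed closed walk of positive length. -/
def DigraphAcyclic {V : Type*} (D : V → V → Prop) : Prop :=
  ∀ v : V, ∀ n : ℕ, 0 < n → ¬ walkN D n v v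

/-- `D` is a bipartite tournament with bipartition `(V1, V2)`. -/
structure IsBipartiteTournament {V : Type*} (D : V → V → Prop) (V1 V2 : Set V) : Prop where
  nonempty1 : V1.Nonempty
  nonempty2 : V2.Nonempty
  union_eq : V1 ∪ V2 = Set.univ
  disj : V1 ∩ V2 = ∅
  oriented : ∀ x ∈ V1, ∀ y ∈ V2, Xor' (D x y) (D y x)
  no_intra : ∀ x y, D x y → (x ∈ V1 ∧ y ∈ V2) ∨ (x ∈ V2 ∧ y ∈ V1)

/-- The competition graph sequence of `D` is eventually equal, starting from `q`. -/
def PeriodicFrom {V : Type*} (D : V → V → Prop) (q : ℕ) : Prop :=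
  ∃ r, 0 < r ∧ ∀ i : ℕ, cmGraph D (q + i) = cmGraph D (q + r + i)

/-- `q` is the competition index of `D`. -/
def IsCindex {V : Type*} (D : V → V → Prop) (q : ℕ) : Prop :=
  0 < q ∧ PeriodicFrom D q ∧ ∀ q', 0 < q' → PeriodicFrom D q' → q ≤ q'

/-- `p` is the competition period of `D`, given that `q` is its competition index. -/
def IsCperiod {V : Type*} (D : V → V → Prop) (q p : ℕ) : Prop :=
  0 < p ∧ cmGraph D q = cmGraph D (q + p) ∧
    ∀ p', 0 < p' → cmGraph D q = cmGraph D (q + p') → p ≤ p'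

/-!
Walks from a vertex of `W_j` have length at most `j`, so `C^m(D)` with `m ≥ ζ(D)` only sees the
vertices of `D_ζ`, the part of `D` that survives sink elimination; since `D` has a cycle, `D_ζ` is
nonempty and sink-free. Any two vertices of `D_{ζ-1}` on the same side of the bipartition beat a
common vertex: a sink `w` of `D_{ζ-1}` if they lie opposite to `w`, and otherwise a sink `w'` of
`D_{ζ-2}` with `w → w'`. Together with long walks inside `D_ζ` this shows that for `m ≥ ζ(D)` the
graph `C^m(D)` is the same-side relation on `D_ζ`. At `m = ζ(D) - 1` a vertex of `w`'s side in
`D_ζ` and `w` itself still compete (both reach `w'`), whereas `w` has no walk of length `ζ(D)`.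
-/

section Walks

variable {V : Type*} {D : V → V → Prop}

lemma walkN_add {a b : ℕ} {u x z : V} (h₁ : walkN D a u x) (h₂ : walkN D b x z) :
    walkN D (a + b) u z := by
  induction a generalizing u with
  | zero => rw [Nat.zero_add, show u = x from h₁]; exact h₂
  | succ a ih =>
    obtain ⟨w, huw, hw⟩ := h₁
    rw [Nat.succ_add]
    exact ⟨w, huw, ih hw⟩

lemma walkN_succ_of_walkN_of_adj {n : ℕ} {u x y : V} (h : walkN D n u x) (hxy : D x y) :
    walkN D (n + 1) u y :=
  walkN_add h ⟨y, hxy, rfl⟩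

lemma exists_walkN_of_le {m n : ℕ} {u z : V} (h : walkN D n u z) (hmn : m ≤ n) :
    ∃ x, walkN D m u x := by
  induction m generalizing n u with
  | zero => exact ⟨u, rfl⟩
  | succ m ih =>
    obtain ⟨n, rfl⟩ : ∃ n', n = n' + 1 := ⟨n - 1, by omega⟩
    obtain ⟨w, huw, hw⟩ := h
    obtain ⟨x, hx⟩ := ih hw (by omega)
    exact ⟨x, w, huw, hx⟩

lemma walkN_mul_of_closed {n : ℕ} {v : V} (h : walkN D n v v) (m : ℕ) :
    walkN D (n * m) v v := by
  induction m with
  | zero => rfl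
  | succ m ih => rw [Nat.mul_succ, Nat.add_comm]; exact walkN_add h ih

lemma exists_walkN_of_closed {n : ℕ} {v : V} (hn : 0 < n) (h : walkN D n v v) (m : ℕ) :
    ∃ z, walkN D m v z :=
  exists_walkN_of_le (walkN_mul_of_closed h m) (Nat.le_mul_of_pos_left m hn)

end Walks

section SinkElimination

variable {V : Type*} {D : V → V → Prop}

lemma Dseq_antitone : Antitone (Dseq D) :=
  antitone_nat_of_succ_le fun _ _ hu => hu.1

lemma not_mem_Dseq_succ_of_mem_Wseq {j : ℕ} {u : V} (hu : u ∈ Wseq D j) :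
    u ∉ Dseq D (j + 1) :=
  fun h => h.2 hu

lemma mem_Dseq_of_walkN {m : ℕ} {x z : V} (h : walkN D m x z) : x ∈ Dseq D m := by
  induction m generalizing x z with
  | zero => trivial
  | succ m ih =>
    obtain ⟨z', hz'⟩ := exists_walkN_of_le h m.le_succ
    obtain ⟨y, hxy, hy⟩ := h
    have hyD : y ∈ Dseq D m := ih hy
    exact ⟨ih hz', fun hx => hx.2 y hyD hxy⟩

lemma exists_adj_mem_Wseq_of_mem_Wseq_succ {j : ℕ} {u : V} (hu : u ∈ Wseq D (j + 1)) :
    ∃ y ∈ Wseq D j, D u y := by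
  obtain ⟨huD, hnot⟩ := hu.1
  have : ∃ y ∈ Dseq D j, D u y := by
    by_contra! h
    exact hnot ⟨huD, h⟩
  obtain ⟨y, hy, huy⟩ := this
  refine ⟨y, ?_, huy⟩
  by_contra hyW
  exact hu.2 y ⟨hy, hyW⟩ huy

lemma exists_walkN_of_mem_Wseq {j : ℕ} {u : V} (hu : u ∈ Wseq D j) : ∃ z, walkN D j u z := by
  induction j generalizing u with
  | zero => exact ⟨u, rfl⟩
  | succ j ih =>
    obtain ⟨y, hy, huy⟩ := exists_adj_mem_Wseq_of_mem_Wseq_succ hu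
    obtain ⟨z, hz⟩ := ih hy
    exact ⟨z, y, huy, hz⟩

lemma exists_adj_of_Wseq_eq_empty {j : ℕ} (hW : Wseq D j = ∅) {u : V} (hu : u ∈ Dseq D j) :
    ∃ x ∈ Dseq D j, D u x := by
  by_contra! h
  exact (Set.eq_empty_iff_forall_notMem.1 hW) u ⟨hu, h⟩

lemma exists_walkN_of_Wseq_eq_empty {j : ℕ} (hW : Wseq D j = ∅) {u : V} (hu : u ∈ Dseq D j)
    (n : ℕ) : ∃ x ∈ Dseq D j, walkN D n u x := by
  induction n with
  | zero => exact ⟨u, hu, rfl⟩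
  | succ n ih =>
    obtain ⟨x, hx, hux⟩ := ih
    obtain ⟨y, hy, hxy⟩ := exists_adj_of_Wseq_eq_empty hW hx
    exact ⟨y, hy, walkN_succ_of_walkN_of_adj hux hxy⟩

lemma Wseq_eq_empty_of_closed {k n : ℕ} {v : V} (hn : 0 < n) (hv : walkN D n v v)
    (hk : Wseq D k = Dseq D k ∨ Wseq D k = ∅) : Wseq D k = ∅ := by
  refine hk.resolve_left fun h => ?_
  obtain ⟨z, hz⟩ := exists_walkN_of_closed hn hv (k + 1)
  have hvD := mem_Dseq_of_walkN hz
  exact not_mem_Dseq_succ_of_mem_Wseq (h ▸ hvD.1) hvD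

end SinkElimination

namespace IsBipartiteTournament

variable {V : Type*} {D : V → V → Prop} {V1 V2 : Set V}

lemma mem_V2_of_not_mem_V1 (hD : IsBipartiteTournament D V1 V2) {x : V} (h : x ∉ V1) :
    x ∈ V2 :=
  ((Set.mem_union x V1 V2).1 (hD.union_eq ▸ Set.mem_univ x)).resolve_left h

lemma not_mem_V1_of_mem_V2 (hD : IsBipartiteTournament D V1 V2) {x : V} (h : x ∈ V2) :
    x ∉ V1 :=
  fun h₁ => (hD.disj ▸ (⟨h₁, h⟩ : x ∈ V1 ∩ V2) : x ∈ (∅ : Set V))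

lemma mem_V1_iff_of_adj (hD : IsBipartiteTournament D V1 V2) {u v : V} (h : D u v) :
    v ∈ V1 ↔ u ∉ V1 := by
  rcases hD.no_intra u v h with ⟨hu, hv⟩ | ⟨hu, hv⟩
  · have := hD.not_mem_V1_of_mem_V2 hv
    tauto
  · have := hD.not_mem_V1_of_mem_V2 hu
    tauto

lemma mem_V1_iff_of_walkN (hD : IsBipartiteTournament D V1 V2) {m : ℕ} {u z : V}
    (h : walkN D m u z) : z ∈ V1 ↔ (u ∈ V1 ↔ Even m) := by
  induction m generalizing u with
  | zero => rw [show u = z from h]; simp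
  | succ m ih =>
    obtain ⟨w, huw, hw⟩ := h
    have := hD.mem_V1_iff_of_adj huw
    rw [ih hw, Nat.even_add_one]
    tauto

lemma adj_of_not_adj (hD : IsBipartiteTournament D V1 V2) {s x : V} (hsx : ¬ D s x)
    (hside : x ∈ V1 ↔ s ∉ V1) : D x s := by
  by_cases hx : x ∈ V1
  · rcases hD.oriented x hx s (hD.mem_V2_of_not_mem_V1 (hside.1 hx)) with ⟨h, -⟩ | ⟨h, -⟩
    exacts [h, absurd h hsx]
  · have hs : s ∈ V1 := by tauto
    rcases hD.oriented s hs x (hD.mem_V2_of_not_mem_V1 hx) with ⟨h, -⟩ | ⟨h, -⟩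
    exacts [absurd h hsx, h]

lemma adj_of_mem_Wseq (hD : IsBipartiteTournament D V1 V2) {j : ℕ} {s x : V}
    (hs : s ∈ Wseq D j) (hx : x ∈ Dseq D j) (hside : x ∈ V1 ↔ s ∉ V1) : D x s :=
  hD.adj_of_not_adj (hs.2 x hx) hside

lemma exists_mem_Dseq_mem_V1_iff (hD : IsBipartiteTournament D V1 V2) {j : ℕ}
    (hW : Wseq D j = ∅) {v : V} (hv : v ∈ Dseq D j) (w : V) :
    ∃ u ∈ Dseq D j, (u ∈ V1 ↔ w ∈ V1) := by
  obtain ⟨y, hy, hvy⟩ := exists_adj_of_Wseq_eq_empty hW hv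
  by_cases h : v ∈ V1 ↔ w ∈ V1
  · exact ⟨v, hv, h⟩
  · have := hD.mem_V1_iff_of_adj hvy
    exact ⟨y, hy, by tauto⟩

lemma exists_common_adj (hD : IsBipartiteTournament D V1 V2) {j : ℕ}
    (hW : (Wseq D (j + 1)).Nonempty) {x y : V} (hx : x ∈ Dseq D (j + 1))
    (hy : y ∈ Dseq D (j + 1)) (hxy : x ∈ V1 ↔ y ∈ V1) : ∃ s, D x s ∧ D y s := by
  obtain ⟨w, hw⟩ := hW
  by_cases hside : x ∈ V1 ↔ w ∉ V1
  · exact ⟨w, hD.adj_of_mem_Wseq hw hx hside, hD.adj_of_mem_Wseq hw hy (hxy.symm.trans hside)⟩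
  · obtain ⟨w', hw', hww'⟩ := exists_adj_mem_Wseq_of_mem_Wseq_succ hw
    have hw'side := hD.mem_V1_iff_of_adj hww'
    have hxw' : x ∈ V1 ↔ w' ∉ V1 := by tauto
    exact ⟨w', hD.adj_of_mem_Wseq hw' hx.1 hxw', hD.adj_of_mem_Wseq hw' hy.1 (hxy.symm.trans hxw')⟩

lemma cmGraph_adj_iff_of_le (hD : IsBipartiteTournament D V1 V2) {k m : ℕ}
    (hW : Wseq D (k + 2) = ∅) (hW' : (Wseq D (k + 1)).Nonempty) (hm : k + 2 ≤ m) (u v : V) :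
    (cmGraph D m).Adj u v ↔
      u ≠ v ∧ u ∈ Dseq D (k + 2) ∧ v ∈ Dseq D (k + 2) ∧ (u ∈ V1 ↔ v ∈ V1) := by
  constructor
  · rintro ⟨hne, z, hu, hv⟩
    have := hD.mem_V1_iff_of_walkN hu
    have := hD.mem_V1_iff_of_walkN hv
    exact ⟨hne, Dseq_antitone hm (mem_Dseq_of_walkN hu), Dseq_antitone hm (mem_Dseq_of_walkN hv),
      by tauto⟩
  · rintro ⟨hne, hu, hv, huv⟩
    obtain ⟨n, rfl⟩ : ∃ n, m = n + 1 := ⟨m - 1, by omega⟩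
    obtain ⟨x, hx, hux⟩ := exists_walkN_of_Wseq_eq_empty hW hu n
    obtain ⟨y, hy, hvy⟩ := exists_walkN_of_Wseq_eq_empty hW hv n
    have := hD.mem_V1_iff_of_walkN hux
    have := hD.mem_V1_iff_of_walkN hvy
    obtain ⟨s, hxs, hys⟩ := hD.exists_common_adj hW' hx.1 hy.1 (by tauto)
    exact ⟨hne, s, walkN_succ_of_walkN_of_adj hux hxs, walkN_succ_of_walkN_of_adj hvy hys⟩

lemma cmGraph_eq_of_le (hD : IsBipartiteTournament D V1 V2) {k m : ℕ}
    (hW : Wseq D (k + 2) = ∅) (hW' : (Wseq D (k + 1)).Nonempty) (hm : k + 2 ≤ m) :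
    cmGraph D m = cmGraph D (k + 2) := by
  ext u v
  rw [hD.cmGraph_adj_iff_of_le hW hW' hm, hD.cmGraph_adj_iff_of_le hW hW' le_rfl]

lemma cmGraph_ne_succ (hD : IsBipartiteTournament D V1 V2) {k : ℕ}
    (hW : Wseq D (k + 2) = ∅) (hW' : (Wseq D (k + 1)).Nonempty) (hK : (Dseq D (k + 2)).Nonempty) :
    cmGraph D (k + 1) ≠ cmGraph D (k + 2) := by
  obtain ⟨w, hw⟩ := hW'
  obtain ⟨w', hw', hww'⟩ := exists_adj_mem_Wseq_of_mem_Wseq_succ hw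
  obtain ⟨z, hz⟩ := exists_walkN_of_mem_Wseq hw'
  obtain ⟨u, hu, huw⟩ := hD.exists_mem_Dseq_mem_V1_iff hW hK.some_mem w
  have huw' : D u w' := hD.adj_of_mem_Wseq hw' (Dseq_antitone (by omega) hu)
    (by have := hD.mem_V1_iff_of_adj hww'; tauto)
  have hadj : (cmGraph D (k + 1)).Adj u w :=
    ⟨fun h => not_mem_Dseq_succ_of_mem_Wseq hw (h ▸ hu), z, ⟨w', huw', hz⟩, ⟨w', hww', hz⟩⟩
  intro h
  obtain ⟨-, z', -, hwz'⟩ := h ▸ hadj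
  exact not_mem_Dseq_succ_of_mem_Wseq hw (mem_Dseq_of_walkN hwz')

end IsBipartiteTournament

section CompetitionIndex

variable {V : Type*} {D : V → V → Prop}

lemma eq_of_isCindex {k q : ℕ} (hconst : ∀ m, k + 1 ≤ m → cmGraph D m = cmGraph D (k + 1))
    (hne : cmGraph D k ≠ cmGraph D (k + 1)) (hq : IsCindex D q) : q = k + 1 := by
  have hper : PeriodicFrom D (k + 1) :=
    ⟨1, one_pos, fun i => by rw [hconst (k + 1 + i) (by omega), hconst (k + 1 + 1 + i) (by omega)]⟩
  refine le_antisymm (hq.2.2 _ k.succ_pos hper) (Nat.succ_le_of_lt ?_)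
  by_contra! hqk
  obtain ⟨r, hr, hperq⟩ := hq.2.1
  have h := hperq (k - q)
  rw [show q + (k - q) = k by omega, show q + r + (k - q) = k + r by omega,
    hconst (k + r) (by omega)] at h
  exact hne h

lemma eq_one_of_isCperiod {q p : ℕ} (h : cmGraph D q = cmGraph D (q + 1))
    (hp : IsCperiod D q p) : p = 1 :=
  le_antisymm (hp.2.2 1 one_pos h) hp.1

end CompetitionIndex

theorem cindex_eq_zeta_of_cycle_general {V : Type*} (D : V → V → Prop)
    (V1 V2 : Set V) (hD : IsBipartiteTournament D V1 V2)
    (hcycle : ∃ (v : V) (n : ℕ), 0 < n ∧ walkN D n v v)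
    (k : ℕ) (hk : IsSinkElimIndex D k) (hk2 : 2 ≤ k) :
    (∀ q : ℕ, IsCindex D q → q = k) ∧
    (∀ q p : ℕ, IsCindex D q → IsCperiod D q p → p = 1) := by
  obtain ⟨k, rfl⟩ : ∃ j, k = j + 2 := ⟨k - 2, by omega⟩
  obtain ⟨v, n, hn, hv⟩ := hcycle
  have hW : Wseq D (k + 2) = ∅ := Wseq_eq_empty_of_closed hn hv hk.1
  have hW' : (Wseq D (k + 1)).Nonempty :=
    Set.nonempty_iff_ne_empty.2 (hk.2 (k + 1) (by omega)).2
  obtain ⟨z, hz⟩ := exists_walkN_of_closed hn hv (k + 2)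
  have hconst := fun m (hm : k + 2 ≤ m) => hD.cmGraph_eq_of_le hW hW' hm
  have hcindex : ∀ q, IsCindex D q → q = k + 2 := fun _ =>
    eq_of_isCindex hconst (hD.cmGraph_ne_succ hW hW' ⟨v, mem_Dseq_of_walkN hz⟩)
  refine ⟨hcindex, fun q p hq hp => eq_one_of_isCperiod ?_ hp⟩
  rw [hcindex q hq, hconst (k + 2 + 1) (by omega)]

/-- A bipartite tournament containing a directed cycle and with `ζ(D) ≥ 2`
has `cindex(D) = ζ(D)` and `cperiod(D) = 1`. -/
theorem cindex_eq_zeta_of_cycle {V : Type*} [Fintype V] (D : V → V → Prop)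
    (V1 V2 : Set V) (hD : IsBipartiteTournament D V1 V2)
    (hcycle : ∃ (v : V) (n : ℕ), 0 < n ∧ walkN D n v v)
    (k : ℕ) (hk : IsSinkElimIndex D k) (hk2 : 2 ≤ k) :
    (∀ q : ℕ, IsCindex D q → q = k) ∧
    (∀ q p : ℕ, IsCindex D q → IsCperiod D q p → p = 1) :=
  cindex_eq_zeta_of_cycle_general D V1 V2 hD hcycle k hk hk2
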